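/- Let K be a bounded subset of L¹(0,1). Then the following are equivalent: (a) there exists an Orlicz function G with G(t)/t → ∞ as t → ∞ such that sup{∫_0^1 G(|f|) ds : f ∈ K} < ∞; (b) there exists a positive g ∈ L¹(0,1) such that |f| ≺≺ g for all f ∈ K. -/

import Mathlib

/-!
Both conditions express uniform integrability of `K`. Write `d_f(u) = |{|f| > u}|` for the
distribution function. The layer-cake formula gives `∫₀ᵗ μ(f) = ∫₀^∞ min(t, d_f(u)) du` and
`∫ (|f| - M)⁺ = ∫_M^∞ d_f`, hence `∫₀ᵗ μ(f) ≤ M t + ∫ (|f| - M)⁺` and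
`∫ (|f| - M)⁺ ≤ ∫₀^{d_f(M)} μ(f)`.

(a) ⇒ (b): by convexity `(t - M)⁺ ≤ (M / G M) G t`, so superlinearity of `G` makes the tails
`∫ (|f| - M)⁺` uniformly small; thus `∫₀ᵗ μ(f) ≤ M_ε t + ε` for every `ε`, and a decreasing step
function whose primitive lies above all these bounds is a common majorant.

(b) ⇒ (a): `‖f‖₁ ≤ ‖g‖₁` makes `d_f(M) ≤ ‖g‖₁ / M` uniformly small, so absolute continuity of
`∫ μ(g)` gives levels `Rₙ` with `∫ (|f| - Rₙ)⁺ ≤ 2⁻ⁿ` on `K`, and `G(t) = ∑ₙ (t - Rₙ)⁺` is the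
de la Vallée-Poussin function.
-/

open MeasureTheory Set Filter Topology

/-- An N-function: continuous convex `G : [0,∞) → [0,∞)` with `G 0 = 0`, `G t > 0` for `t > 0`,
`G t / t → 0` as `t → 0+` and `G t / t → ∞` as `t → ∞`. -/
def IsNFunction (G : ℝ → ℝ) : Prop :=
  ContinuousOn G (Ici 0) ∧ ConvexOn ℝ (Ici 0) G ∧ (∀ t, 0 ≤ t → 0 ≤ G t) ∧ G 0 = 0 ∧
  (∀ t, 0 < t → 0 < G t) ∧
  Tendsto (fun t => G t / t) (𝓝[>] 0) (𝓝 0) ∧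
  Tendsto (fun t => G t / t) atTop atTop

/-- An Orlicz function: convex `G : [0,∞) → [0,∞)` with `G 0 = 0`, continuous at `0`,
and not identically zero. -/
def IsOrliczFunction (G : ℝ → ℝ) : Prop :=
  ConvexOn ℝ (Ici 0) G ∧ (∀ t, 0 ≤ t → 0 ≤ G t) ∧ G 0 = 0 ∧
  ContinuousWithinAt G (Ici 0) 0 ∧ ∃ t, 0 ≤ t ∧ G t ≠ 0

/-- Decreasing rearrangement of `|f|` with respect to Lebesgue measure on `(0,1)`. -/
noncomputable def mu01 (f : ℝ → ℝ) (t : ℝ) : ℝ :=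
  sInf {s : ℝ | 0 ≤ s ∧ volume {x | x ∈ Ioo (0:ℝ) 1 ∧ s < |f x|} ≤ ENNReal.ofReal t}

/-- Decreasing rearrangement of `|f|` with respect to Lebesgue measure on `(0,∞)`. -/
noncomputable def muInf (f : ℝ → ℝ) (t : ℝ) : ℝ :=
  sInf {s : ℝ | 0 ≤ s ∧ volume {x | x ∈ Ioi (0:ℝ) ∧ s < |f x|} ≤ ENNReal.ofReal t}

/-- Hardy–Littlewood–Pólya submajorization `|f| ≺≺ g` on `(0,1)`. -/
def Submaj01 (f g : ℝ → ℝ) : Prop :=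
  ∀ t ∈ Ioc (0:ℝ) 1,
    ∫⁻ s in Ioo (0:ℝ) t, ENNReal.ofReal (mu01 f s) ≤
      ∫⁻ s in Ioo (0:ℝ) t, ENNReal.ofReal (mu01 g s)

/-- Hardy–Littlewood–Pólya submajorization `|f| ≺≺ g` on `(0,∞)`. -/
def SubmajInf (f g : ℝ → ℝ) : Prop :=
  ∀ t : ℝ, 0 < t →
    ∫⁻ s in Ioo (0:ℝ) t, ENNReal.ofReal (muInf f s) ≤
      ∫⁻ s in Ioo (0:ℝ) t, ENNReal.ofReal (muInf g s)

open scoped ENNReal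

section DeLaValleePoussin

variable {α : Type*} [MeasurableSpace α]

theorem ConvexOn.sub_le_mul_of_map_zero {G : ℝ → ℝ} (hG : ConvexOn ℝ (Ici 0) G) (hG0 : G 0 = 0)
    (hGnn : ∀ t, 0 ≤ t → 0 ≤ G t) {M x : ℝ} (hM : 0 < M) (hGM : 0 < G M) (hx : 0 ≤ x) :
    x - M ≤ M / G M * G x := by
  rcases le_or_gt x M with hxM | hMx
  · have := hGnn x hx
    have : 0 ≤ M / G M * G x := by positivity
    linarith
  · have hslope : G M / M ≤ G x / x := by
      simpa [hG0] using hG.secant_mono (a := 0) (mem_Ici.2 le_rfl) (mem_Ici.2 hM.le)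
        (mem_Ici.2 hx) hM.ne' (by linarith) hMx.le
    have hx0 : 0 < x := hM.trans hMx
    rw [div_le_div_iff₀ hM hx0] at hslope
    rw [div_mul_eq_mul_div, le_div_iff₀ hGM]
    nlinarith

theorem exists_lintegral_ofReal_sub_le_of_superlinear (μ : Measure α) (K : Set (α → ℝ))
    {G : ℝ → ℝ} (hG : IsOrliczFunction G) (hGtop : Tendsto (fun t => G t / t) atTop atTop)
    {C : ℝ} (hC : ∀ f ∈ K, ∫⁻ x, ENNReal.ofReal (G |f x|) ∂μ ≤ ENNReal.ofReal C)
    {ε : ℝ} (hε : 0 < ε) :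
    ∃ M, 0 ≤ M ∧ ∀ f ∈ K, ∫⁻ x, ENNReal.ofReal (|f x| - M) ∂μ ≤ ENNReal.ofReal ε := by
  obtain ⟨hconv, hGnn, hG0, -, -⟩ := hG
  set C' := max C 0
  obtain ⟨M, hMslope, hM1⟩ :=
    ((hGtop.eventually_ge_atTop ((C' + 1) / ε)).and (eventually_ge_atTop 1)).exists
  have hM : (0 : ℝ) < M := by linarith
  have hGM : 0 < G M := by
    have : 0 < G M / M := lt_of_lt_of_le (by positivity) hMslope
    exact (div_pos_iff_of_pos_right hM).1 this
  refine ⟨M, hM.le, fun f hf => ?_⟩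
  have hcoef : M / G M * C' ≤ ε := by
    rw [le_div_iff₀ hM, div_mul_eq_mul_div, div_le_iff₀ hε] at hMslope
    rw [div_mul_eq_mul_div, div_le_iff₀ hGM]
    nlinarith [le_max_right C 0]
  calc ∫⁻ x, ENNReal.ofReal (|f x| - M) ∂μ
      ≤ ∫⁻ x, ENNReal.ofReal (M / G M) * ENNReal.ofReal (G |f x|) ∂μ := by
        refine lintegral_mono fun x => ?_
        rw [← ENNReal.ofReal_mul (by positivity)]
        exact ENNReal.ofReal_le_ofReal
          (hconv.sub_le_mul_of_map_zero hG0 hGnn hM hGM (abs_nonneg _))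
    _ = ENNReal.ofReal (M / G M) * ∫⁻ x, ENNReal.ofReal (G |f x|) ∂μ :=
        lintegral_const_mul' _ _ ENNReal.ofReal_ne_top
    _ ≤ ENNReal.ofReal (M / G M) * ENNReal.ofReal C' := by
        gcongr
        exact (hC f hf).trans (ENNReal.ofReal_le_ofReal (le_max_left _ _))
    _ ≤ ENNReal.ofReal ε := by
        rw [← ENNReal.ofReal_mul (by positivity)]
        exact ENNReal.ofReal_le_ofReal hcoef

noncomputable def orliczOfLevels (R : ℕ → ℝ) (t : ℝ) : ℝ := ∑' n, max (t - R n) 0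

variable {R : ℕ → ℝ}

theorem summable_orliczOfLevels (hR : Tendsto R atTop atTop) (t : ℝ) :
    Summable fun n => max (t - R n) 0 := by
  obtain ⟨N, hN⟩ := eventually_atTop.1 (hR.eventually_ge_atTop t)
  refine summable_of_ne_finset_zero (s := Finset.range N) fun n hn => ?_
  exact max_eq_right (by linarith [hN n (by simpa using hn)])

theorem orliczOfLevels_eq_zero (hR1 : ∀ n, 1 ≤ R n) {t : ℝ} (ht : t < 1) :
    orliczOfLevels R t = 0 := by
  have : ∀ n, max (t - R n) 0 = 0 := fun n => max_eq_right (by linarith [hR1 n])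
  simp [orliczOfLevels, this]

theorem isOrliczFunction_orliczOfLevels (hR1 : ∀ n, 1 ≤ R n) (hR : Tendsto R atTop atTop) :
    IsOrliczFunction (orliczOfLevels R) := by
  have hsum := summable_orliczOfLevels hR
  refine ⟨⟨convex_Ici 0, fun x _ y _ a b ha hb hab => ?_⟩,
    fun t _ => tsum_nonneg fun n => le_max_right _ _,
    orliczOfLevels_eq_zero hR1 one_pos, ?_, ⟨R 0 + 1, by linarith [hR1 0], ?_⟩⟩
  · have hterm : ∀ n, max (a * x + b * y - R n) 0 ≤
        a * max (x - R n) 0 + b * max (y - R n) 0 := by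
      intro n
      refine max_le ?_ (by positivity)
      have h1 := mul_le_mul_of_nonneg_left (le_max_left (x - R n) 0) ha
      have h2 := mul_le_mul_of_nonneg_left (le_max_left (y - R n) 0) hb
      linear_combination h1 + h2 + R n * hab
    simp only [orliczOfLevels, smul_eq_mul]
    rw [← tsum_mul_left, ← tsum_mul_left,
      ← Summable.tsum_add ((hsum x).mul_left a) ((hsum y).mul_left b)]
    exact Summable.tsum_le_tsum hterm (hsum _) (((hsum x).mul_left a).add ((hsum y).mul_left b))
  · refine (continuousWithinAt_const (b := (0 : ℝ))).congr_of_eventuallyEq ?_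
      (orliczOfLevels_eq_zero hR1 one_pos)
    filter_upwards [mem_nhdsWithin_of_mem_nhds (Iio_mem_nhds one_pos)] with t ht
    exact orliczOfLevels_eq_zero hR1 ht
  · have : (1 : ℝ) ≤ orliczOfLevels R (R 0 + 1) := by
      simpa [orliczOfLevels] using (hsum (R 0 + 1)).le_tsum 0 (fun n _ => le_max_right _ _)
    linarith

theorem tendsto_orliczOfLevels_div (hR : Tendsto R atTop atTop) :
    Tendsto (fun t => orliczOfLevels R t / t) atTop atTop := by
  refine tendsto_atTop.2 fun b => ?_
  obtain ⟨N, hN⟩ := exists_nat_ge (b + 1)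
  set S := ∑ n ∈ Finset.range N, R n
  filter_upwards [eventually_ge_atTop (max 1 S)] with t ht
  have ht1 : 1 ≤ t := le_of_max_le_left ht
  have hlow : N * t - S ≤ orliczOfLevels R t :=
    calc N * t - S = ∑ n ∈ Finset.range N, (t - R n) := by simp [S, Finset.sum_sub_distrib]
      _ ≤ ∑ n ∈ Finset.range N, max (t - R n) 0 :=
        Finset.sum_le_sum fun n _ => le_max_left _ _
      _ ≤ orliczOfLevels R t :=
        (summable_orliczOfLevels hR t).sum_le_tsum _ fun n _ => le_max_right _ _
  rw [le_div_iff₀ (by linarith)]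
  nlinarith [le_of_max_le_right ht]

theorem exists_isOrliczFunction_of_lintegral_ofReal_sub_le (μ : Measure α) (K : Set (α → ℝ))
    (hK : ∀ f ∈ K, AEMeasurable f μ)
    (htail : ∀ ε > 0, ∃ M, ∀ f ∈ K, ∫⁻ x, ENNReal.ofReal (|f x| - M) ∂μ ≤ ENNReal.ofReal ε) :
    ∃ G : ℝ → ℝ, IsOrliczFunction G ∧ Tendsto (fun t => G t / t) atTop atTop ∧
      ∃ C : ℝ, ∀ f ∈ K, ∫⁻ x, ENNReal.ofReal (G |f x|) ∂μ ≤ ENNReal.ofReal C := by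
  choose M hM using fun n : ℕ => htail ((2 : ℝ)⁻¹ ^ n) (by positivity)
  set R : ℕ → ℝ := fun n => max (M n) (n + 1)
  have hR1 : ∀ n, 1 ≤ R n := fun n => le_max_of_le_right (by simp)
  have hR : Tendsto R atTop atTop :=
    tendsto_atTop_mono (fun n => le_max_right _ _)
      (tendsto_atTop_add_const_right _ 1 tendsto_natCast_atTop_atTop)
  refine ⟨orliczOfLevels R, isOrliczFunction_orliczOfLevels hR1 hR,
    tendsto_orliczOfLevels_div hR, 2, fun f hf => ?_⟩
  have hsum := summable_orliczOfLevels hR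
  calc ∫⁻ x, ENNReal.ofReal (orliczOfLevels R |f x|) ∂μ
      = ∫⁻ x, ∑' n, ENNReal.ofReal (|f x| - R n) ∂μ := by
        refine lintegral_congr fun x => ?_
        rw [orliczOfLevels, ENNReal.ofReal_tsum_of_nonneg (fun n => le_max_right _ _) (hsum _)]
        simp [ENNReal.ofReal_max]
    _ = ∑' n, ∫⁻ x, ENNReal.ofReal (|f x| - R n) ∂μ :=
        lintegral_tsum fun n => ((hK f hf).abs.sub_const _).ennreal_ofReal
    _ ≤ ∑' n, ENNReal.ofReal ((2 : ℝ)⁻¹ ^ n) := by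
        refine ENNReal.tsum_le_tsum fun n => le_trans (lintegral_mono fun x => ?_) (hM n f hf)
        exact ENNReal.ofReal_le_ofReal (by linarith [le_max_left (M n) (n + 1)])
    _ = ENNReal.ofReal 2 := by
        rw [← ENNReal.ofReal_tsum_of_nonneg (fun n => by positivity)
          (summable_geometric_of_lt_one (by norm_num) (by norm_num)), tsum_geometric_inv_two]

end DeLaValleePoussin

theorem lintegral_Ioi_zero_comp_add_right (F : ℝ → ℝ≥0∞) (M : ℝ) :
    ∫⁻ t in Ioi 0, F (t + M) = ∫⁻ u in Ioi M, F u := by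
  rw [← lintegral_indicator measurableSet_Ioi, ← lintegral_indicator measurableSet_Ioi]
  refine Eq.trans ?_ (lintegral_add_right_eq_self _ M)
  congr 1
  ext t
  simp [indicator]

theorem lintegral_ofReal_sub_eq_lintegral_meas_lt {α : Type*} [MeasurableSpace α]
    (ν : Measure α) {h : α → ℝ} (hh : AEMeasurable h ν) (M : ℝ) :
    ∫⁻ x, ENNReal.ofReal (h x - M) ∂ν = ∫⁻ u in Ioi M, ν {x | u < h x} := by
  calc ∫⁻ x, ENNReal.ofReal (h x - M) ∂ν = ∫⁻ x, ENNReal.ofReal (max (h x - M) 0) ∂ν := by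
        simp [ENNReal.ofReal_max]
    _ = ∫⁻ t in Ioi 0, ν {x | t < max (h x - M) 0} :=
        lintegral_eq_lintegral_meas_lt ν (ae_of_all _ fun x => le_max_right _ _)
          ((hh.sub_const M).max aemeasurable_const)
    _ = ∫⁻ t in Ioi 0, ν {x | t + M < h x} := by
        refine setLIntegral_congr_fun measurableSet_Ioi fun t (ht : 0 < t) => ?_
        congr 1
        ext x
        simp only [mem_ofPred_eq, lt_max_iff, not_lt_of_gt ht, or_false]
        constructor <;> intro <;> linarith
    _ = ∫⁻ u in Ioi M, ν {x | u < h x} := lintegral_Ioi_zero_comp_add_right (fun u => ν {x | u < h x}) M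

/-- The distribution function of `|f|` on `(0,1)`, of which `mu01 f` is the generalized inverse. -/
noncomputable def distrib01 (f : ℝ → ℝ) (u : ℝ) : ℝ≥0∞ :=
  volume.restrict (Ioo (0 : ℝ) 1) {x | u < |f x|}

section Rearrangement

variable {f : ℝ → ℝ}

theorem mu01_eq_sInf (f : ℝ → ℝ) (t : ℝ) :
    mu01 f t = sInf {u | 0 ≤ u ∧ distrib01 f u ≤ ENNReal.ofReal t} := by
  simp only [mu01, distrib01, Measure.restrict_apply' measurableSet_Ioo, inter_comm]
  rfl

theorem mu01_nonneg (f : ℝ → ℝ) (t : ℝ) : 0 ≤ mu01 f t :=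
  Real.sInf_nonneg fun _ hu => hu.1

theorem distrib01_le_one (f : ℝ → ℝ) (u : ℝ) : distrib01 f u ≤ 1 :=
  calc distrib01 f u ≤ volume.restrict (Ioo (0 : ℝ) 1) univ := measure_mono (subset_univ _)
    _ = 1 := by simp

theorem distrib01_ne_top (f : ℝ → ℝ) (u : ℝ) : distrib01 f u ≠ ⊤ :=
  ne_top_of_le_ne_top ENNReal.one_ne_top (distrib01_le_one f u)

theorem antitone_distrib01 (f : ℝ → ℝ) : Antitone (distrib01 f) :=
  fun _ _ huv => measure_mono fun _ hx => lt_of_le_of_lt huv hx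

theorem distrib01_le_of_forall_lt {u : ℝ} {c : ℝ≥0∞} (h : ∀ v, u < v → distrib01 f v ≤ c) :
    distrib01 f u ≤ c := by
  have hunion : {x | u < |f x|} = ⋃ n : ℕ, {x | u + 1 / (n + 1) < |f x|} := by
    ext x
    simp only [mem_ofPred_eq, mem_iUnion]
    refine ⟨fun hx => ?_, fun ⟨n, hn⟩ => lt_trans (by simp; positivity) hn⟩
    obtain ⟨n, hn⟩ := exists_nat_one_div_lt (sub_pos.2 hx)
    exact ⟨n, by linarith⟩
  have hmono : Monotone fun n : ℕ => {x | u + 1 / ((n : ℝ) + 1) < |f x|} :=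
    fun m n hmn x (hx : u + 1 / ((m : ℝ) + 1) < |f x|) => by
      have : 1 / ((n : ℝ) + 1) ≤ 1 / ((m : ℝ) + 1) := by gcongr
      exact lt_of_le_of_lt (by linarith) hx
  rw [distrib01, hunion, hmono.measure_iUnion]
  exact iSup_le fun n => h _ (by simp; positivity)

variable (hf : AEMeasurable f (volume.restrict (Ioo (0 : ℝ) 1)))
include hf

theorem tendsto_distrib01_atTop : Tendsto (distrib01 f) atTop (𝓝 0) := by
  have hempty : ⋂ u : ℝ, {x | u < |f x|} = ∅ :=
    eq_empty_of_forall_notMem fun x hx => lt_irrefl |f x| (mem_iInter.1 hx |f x|)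
  have := tendsto_measure_iInter_atTop (μ := volume.restrict (Ioo (0 : ℝ) 1))
    (s := fun u : ℝ => {x | u < |f x|})
    (fun u => nullMeasurableSet_lt aemeasurable_const hf.abs)
    (fun u v huv x hx => lt_of_le_of_lt huv hx) ⟨0, distrib01_ne_top f 0⟩
  rw [hempty, measure_empty] at this
  exact this

theorem exists_distrib01_le {s : ℝ} (hs : 0 < s) :
    ∃ u, 0 ≤ u ∧ distrib01 f u ≤ ENNReal.ofReal s :=
  (((tendsto_distrib01_atTop hf).eventually_le_const (by simpa using hs)).and
    (eventually_ge_atTop 0)).exists.imp fun _ hu => ⟨hu.2, hu.1⟩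

theorem mu01_le_iff {s u : ℝ} (hs : 0 < s) (hu : 0 ≤ u) :
    mu01 f s ≤ u ↔ distrib01 f u ≤ ENNReal.ofReal s := by
  have hbdd : BddBelow {u | 0 ≤ u ∧ distrib01 f u ≤ ENNReal.ofReal s} := ⟨0, fun _ hv => hv.1⟩
  rw [mu01_eq_sInf]
  refine ⟨fun hle => distrib01_le_of_forall_lt fun v huv => ?_, fun hd => csInf_le hbdd ⟨hu, hd⟩⟩
  obtain ⟨w, hw, hwv⟩ :=
    (csInf_lt_iff hbdd (exists_distrib01_le hf hs)).1 (lt_of_le_of_lt hle huv)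
  exact (antitone_distrib01 f hwv.le).trans hw.2

theorem lt_mu01_iff {s u : ℝ} (hs : 0 < s) (hu : 0 ≤ u) :
    u < mu01 f s ↔ s < (distrib01 f u).toReal := by
  rw [← not_le, mu01_le_iff hf hs hu, not_le,
    ENNReal.ofReal_lt_iff_lt_toReal hs.le (distrib01_ne_top f u)]

theorem antitoneOn_mu01 : AntitoneOn (mu01 f) (Ioi 0) := fun s hs _ hs' hss' =>
  (mu01_le_iff hf hs' (mu01_nonneg f s)).2
    (((mu01_le_iff hf hs (mu01_nonneg f s)).1 le_rfl).trans (ENNReal.ofReal_le_ofReal hss'))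

theorem lintegral_mu01_eq (t : ℝ) :
    ∫⁻ s in Ioo 0 t, ENNReal.ofReal (mu01 f s) =
      ∫⁻ u in Ioi 0, min (ENNReal.ofReal t) (distrib01 f u) := by
  rcases le_or_gt t 0 with ht | ht
  · simp [Ioo_eq_empty_of_le ht, ENNReal.ofReal_of_nonpos ht]
  have hmeas : AEMeasurable (mu01 f) (volume.restrict (Ioo 0 t)) :=
    aemeasurable_restrict_of_antitoneOn measurableSet_Ioo
      ((antitoneOn_mu01 hf).mono fun _ hs => hs.1)
  rw [lintegral_eq_lintegral_meas_lt _ (ae_of_all _ (mu01_nonneg f)) hmeas]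
  refine setLIntegral_congr_fun measurableSet_Ioi fun u (hu : 0 < u) => ?_
  have hset : {s | u < mu01 f s} ∩ Ioo 0 t = Ioo 0 (min t (distrib01 f u).toReal) := by
    ext s
    simp only [mem_inter_iff, mem_ofPred_eq, mem_Ioo, lt_min_iff]
    constructor
    · rintro ⟨hus, hs0, hst⟩
      exact ⟨hs0, hst, (lt_mu01_iff hf hs0 hu.le).1 hus⟩
    · rintro ⟨hs0, hst, hsd⟩
      exact ⟨(lt_mu01_iff hf hs0 hu.le).2 hsd, hs0, hst⟩
  rw [Measure.restrict_apply' measurableSet_Ioo, hset, Real.volume_Ioo, sub_zero,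
    ENNReal.ofReal_min, ENNReal.ofReal_toReal (distrib01_ne_top f u)]

theorem lintegral_mu01_one :
    ∫⁻ s in Ioo 0 1, ENNReal.ofReal (mu01 f s) = ∫⁻ x in Ioo 0 1, ENNReal.ofReal |f x| := by
  rw [lintegral_mu01_eq hf, lintegral_eq_lintegral_meas_lt _ (ae_of_all _ fun x => abs_nonneg _)
    hf.abs, ENNReal.ofReal_one]
  simp_rw [min_eq_right (distrib01_le_one f _)]
  rfl

/-- Hardy–Littlewood: `μ(f)` puts the largest values of `|f|` first. -/
theorem setLIntegral_abs_le_lintegral_mu01 {t : ℝ} (ht : t ≤ 1) :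
    ∫⁻ x in Ioo 0 t, ENNReal.ofReal |f x| ≤ ∫⁻ s in Ioo 0 t, ENNReal.ofReal (mu01 f s) := by
  have hsub : Ioo (0 : ℝ) t ⊆ Ioo 0 1 := Ioo_subset_Ioo_right ht
  rw [lintegral_mu01_eq hf, lintegral_eq_lintegral_meas_lt _ (ae_of_all _ fun x => abs_nonneg _)
    (hf.abs.mono_measure (Measure.restrict_mono hsub le_rfl))]
  refine lintegral_mono fun u => le_min ?_ (Measure.restrict_mono hsub le_rfl _)
  simpa using measure_mono (μ := volume.restrict (Ioo 0 t)) (subset_univ {x | u < |f x|})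

theorem lintegral_ofReal_sub_eq_lintegral_distrib01 (M : ℝ) :
    ∫⁻ x in Ioo 0 1, ENNReal.ofReal (|f x| - M) = ∫⁻ u in Ioi M, distrib01 f u :=
  lintegral_ofReal_sub_eq_lintegral_meas_lt _ hf.abs M

theorem lintegral_mu01_le_add {M : ℝ} (hM : 0 ≤ M) (t : ℝ) :
    ∫⁻ s in Ioo 0 t, ENNReal.ofReal (mu01 f s) ≤
      ENNReal.ofReal (M * t) + ∫⁻ x in Ioo 0 1, ENNReal.ofReal (|f x| - M) := by
  rw [lintegral_mu01_eq hf, lintegral_ofReal_sub_eq_lintegral_distrib01 hf,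
    ← Ioc_union_Ioi_eq_Ioi hM, lintegral_union measurableSet_Ioi Ioc_disjoint_Ioi_same]
  gcongr
  · calc ∫⁻ u in Ioc 0 M, min (ENNReal.ofReal t) (distrib01 f u)
        ≤ ∫⁻ _ in Ioc 0 M, ENNReal.ofReal t := lintegral_mono fun _ => min_le_left _ _
      _ = ENNReal.ofReal (M * t) := by
        rw [setLIntegral_const, Real.volume_Ioc, sub_zero, ENNReal.ofReal_mul hM, mul_comm]
  · exact min_le_right _ _

theorem lintegral_ofReal_sub_le_lintegral_mu01 {M : ℝ} (hM : 0 ≤ M) :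
    ∫⁻ x in Ioo 0 1, ENNReal.ofReal (|f x| - M) ≤
      ∫⁻ s in Ioo 0 (distrib01 f M).toReal, ENNReal.ofReal (mu01 f s) := by
  rw [lintegral_ofReal_sub_eq_lintegral_distrib01 hf, lintegral_mu01_eq hf,
    ENNReal.ofReal_toReal (distrib01_ne_top f M)]
  calc ∫⁻ u in Ioi M, distrib01 f u
      = ∫⁻ u in Ioi M, min (distrib01 f M) (distrib01 f u) :=
        setLIntegral_congr_fun measurableSet_Ioi fun u hu =>
          (min_eq_right (antitone_distrib01 f (le_of_lt hu))).symm
    _ ≤ _ := lintegral_mono_set (Ioi_subset_Ioi hM)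

theorem mul_distrib01_le_lintegral (M : ℝ) :
    ENNReal.ofReal M * distrib01 f M ≤ ∫⁻ x in Ioo 0 1, ENNReal.ofReal |f x| :=
  (mul_le_mul_right (measure_mono fun _ hx => ENNReal.ofReal_le_ofReal (le_of_lt hx)) _).trans
    (mul_meas_ge_le_lintegral₀ hf.abs.ennreal_ofReal _)

end Rearrangement

theorem Submaj01.lintegral_le {f g : ℝ → ℝ} (h : Submaj01 f g) {t : ℝ} (ht : t ≤ 1) :
    ∫⁻ s in Ioo 0 t, ENNReal.ofReal (mu01 f s) ≤ ∫⁻ s in Ioo 0 t, ENNReal.ofReal (mu01 g s) := by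
  rcases le_or_gt t 0 with ht0 | ht0
  · simp [Ioo_eq_empty_of_le ht0]
  · exact h t ⟨ht0, ht⟩

theorem exists_lintegral_ofReal_sub_le_of_submaj01 {K : Set (ℝ → ℝ)}
    (hK : ∀ f ∈ K, AEMeasurable f (volume.restrict (Ioo 0 1)))
    {g : ℝ → ℝ} (hg : IntegrableOn g (Ioo 0 1)) (hsub : ∀ f ∈ K, Submaj01 f g)
    {ε : ℝ} (hε : 0 < ε) :
    ∃ M, ∀ f ∈ K, ∫⁻ x in Ioo 0 1, ENNReal.ofReal (|f x| - M) ≤ ENNReal.ofReal ε := by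
  have hL : ∫⁻ s in Ioo 0 1, ENNReal.ofReal (mu01 g s) ≠ ⊤ := by
    rw [lintegral_mu01_one hg.aemeasurable]
    exact hg.abs.lintegral_lt_top.ne
  have hnorm : ∀ f ∈ K, ∫⁻ x in Ioo 0 1, ENNReal.ofReal |f x| ≤
      ∫⁻ s in Ioo 0 1, ENNReal.ofReal (mu01 g s) := fun f hf => by
    rw [← lintegral_mu01_one (hK f hf)]
    exact (hsub f hf).lintegral_le le_rfl
  obtain ⟨δ, hδ, hsmall⟩ := exists_pos_setLIntegral_lt_of_measure_lt hL
    (ENNReal.ofReal_pos.2 hε).ne'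
  obtain ⟨n, hn⟩ := ENNReal.exists_nat_gt (ENNReal.div_lt_top hL hδ.ne').ne
  refine ⟨n, fun f hf => ?_⟩
  set τ := (distrib01 f n).toReal
  have hτ1 : τ ≤ 1 := ENNReal.toReal_le_of_le_ofReal zero_le_one
    (by simpa using distrib01_le_one f n)
  have hτδ : distrib01 f n < δ := by
    by_contra! hge
    refine ((ENNReal.div_lt_iff (Or.inl hδ.ne') (Or.inr (by simpa using hL))).1 hn).not_ge ?_
    calc (n : ℝ≥0∞) * δ ≤ n * distrib01 f n := by gcongr
      _ ≤ ∫⁻ x in Ioo 0 1, ENNReal.ofReal |f x| := by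
          simpa using mul_distrib01_le_lintegral (hK f hf) n
      _ ≤ _ := hnorm f hf
  have hvol : volume.restrict (Ioo (0 : ℝ) 1) (Ioo 0 τ) < δ := by
    rwa [Measure.restrict_apply measurableSet_Ioo, inter_eq_left.2 (Ioo_subset_Ioo_right hτ1),
      Real.volume_Ioo, sub_zero, ENNReal.ofReal_toReal (distrib01_ne_top f n)]
  calc ∫⁻ x in Ioo 0 1, ENNReal.ofReal (|f x| - n)
      ≤ ∫⁻ s in Ioo 0 τ, ENNReal.ofReal (mu01 f s) :=
        lintegral_ofReal_sub_le_lintegral_mu01 (hK f hf) n.cast_nonneg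
    _ ≤ ∫⁻ s in Ioo 0 τ, ENNReal.ofReal (mu01 g s) := (hsub f hf).lintegral_le hτ1
    _ ≤ ENNReal.ofReal ε := by
        refine le_of_lt ?_
        convert hsmall _ hvol using 2
        rw [Measure.restrict_restrict measurableSet_Ioo,
          inter_eq_left.2 (Ioo_subset_Ioo_right hτ1)]

noncomputable def staircase (a r : ℕ → ℝ) (x : ℝ) : ℝ≥0∞ :=
  ∑' n, (Ioo 0 (r n)).indicator (fun _ => ENNReal.ofReal (a n)) x

theorem measurable_staircase (a r : ℕ → ℝ) : Measurable (staircase a r) :=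
  Measurable.tsum fun _ => measurable_const.indicator measurableSet_Ioo

theorem setLIntegral_Ioo_staircase (a r : ℕ → ℝ) (t : ℝ) :
    ∫⁻ x in Ioo 0 t, staircase a r x =
      ∑' n, ENNReal.ofReal (a n) * ENNReal.ofReal (min (r n) t) := by
  unfold staircase
  rw [lintegral_tsum fun n =>
    (measurable_const.indicator measurableSet_Ioo).aemeasurable]
  refine tsum_congr fun n => ?_
  rw [lintegral_indicator_const measurableSet_Ioo, Measure.restrict_apply measurableSet_Ioo,
    Ioo_inter_Ioo, Real.volume_Ioo, max_self, sub_zero]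

theorem staircase_ne_top (a : ℕ → ℝ) {r : ℕ → ℝ} (hr : Tendsto r atTop (𝓝 0)) {x : ℝ}
    (hx : 0 < x) : staircase a r x ≠ ⊤ := by
  obtain ⟨N, hN⟩ := eventually_atTop.1 (hr.eventually (gt_mem_nhds hx))
  unfold staircase
  rw [tsum_eq_sum (s := Finset.range N) fun n hn =>
    indicator_of_notMem (fun hmem => (hN n (by simpa using hn)).not_gt hmem.2) _]
  exact ENNReal.sum_ne_top.2 fun n _ =>
    ne_top_of_le_ne_top ENNReal.ofReal_ne_top (indicator_le_self' (fun _ _ => zero_le) x)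

theorem lintegral_staircase_le_tsum (a r : ℕ → ℝ) :
    ∫⁻ x in Ioo 0 1, staircase a r x ≤ ∑' n, ENNReal.ofReal (a n) * ENNReal.ofReal (r n) := by
  rw [setLIntegral_Ioo_staircase]
  gcongr
  exact min_le_left _ _

theorem mul_le_setLIntegral_staircase (a r : ℕ → ℝ) {n : ℕ} {t : ℝ} (hn : r n ≤ t) :
    ENNReal.ofReal (a n) * ENNReal.ofReal (r n) ≤ ∫⁻ x in Ioo 0 t, staircase a r x := by
  rw [setLIntegral_Ioo_staircase, ← min_eq_left hn]
  exact ENNReal.le_tsum (f := fun n => ENNReal.ofReal (a n) * ENNReal.ofReal (min (r n) t)) n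

theorem tendsto_inv_two_pow_div {A : ℕ → ℝ} (hA : ∀ n, 1 ≤ A n) :
    Tendsto (fun n => (2 : ℝ)⁻¹ ^ n / A n) atTop (𝓝 0) :=
    squeeze_zero (fun n => div_nonneg (by positivity) (by linarith [hA n]))
      (fun n => div_le_self (by positivity) (hA n))
      (tendsto_pow_atTop_nhds_zero_of_lt_one (by norm_num) (by norm_num))

/-- The witness is `A 0 + ∑ₙ 4 Aₙ 1_{(0, 2⁻ⁿ / Aₙ)}`, whose `n`-th step has mass `4 · 2⁻ⁿ`. -/
theorem exists_step_majorant {A : ℕ → ℝ} (hA : ∀ n, 1 ≤ A n) :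
    ∃ g : ℝ → ℝ, (∀ x ∈ Ioo (0 : ℝ) 1, 0 < g x) ∧ IntegrableOn g (Ioo 0 1) ∧
      ∀ t ∈ Ioc (0 : ℝ) 1, ∀ n, (2 : ℝ)⁻¹ ^ n / A n ≤ t →
        ENNReal.ofReal (A 0 * t + 4 * (2 : ℝ)⁻¹ ^ n) ≤ ∫⁻ x in Ioo 0 t, ENNReal.ofReal (g x) := by
  set r : ℕ → ℝ := fun n => (2 : ℝ)⁻¹ ^ n / A n
  have hr_tendsto : Tendsto r atTop (𝓝 0) := tendsto_inv_two_pow_div hA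
  have hmass : ∀ n, ENNReal.ofReal (4 * A n) * ENNReal.ofReal (r n) =
      ENNReal.ofReal (4 * (2 : ℝ)⁻¹ ^ n) := fun n => by
    rw [← ENNReal.ofReal_mul (by linarith [hA n]), mul_assoc,
      mul_div_cancel₀ _ (by linarith [hA n] : A n ≠ 0)]
  set T : ℝ → ℝ≥0∞ := fun x => ENNReal.ofReal (A 0) + staircase (fun n => 4 * A n) r x
  have hT_ne_top : ∀ x ∈ Ioo (0 : ℝ) 1, T x ≠ ⊤ := fun x hx =>
    ENNReal.add_ne_top.2 ⟨ENNReal.ofReal_ne_top, staircase_ne_top _ hr_tendsto hx.1⟩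
  have hT : ∀ t, ∫⁻ x in Ioo 0 t, T x = ENNReal.ofReal (A 0) * volume (Ioo 0 t) +
      ∫⁻ x in Ioo 0 t, staircase (fun n => 4 * A n) r x := fun t =>
    by rw [lintegral_add_left measurable_const, setLIntegral_const]
  refine ⟨fun x => (T x).toReal, fun x hx => ENNReal.toReal_pos ?_ (hT_ne_top x hx), ?_, ?_⟩
  · exact (lt_of_lt_of_le (ENNReal.ofReal_pos.2 (by linarith [hA 0])) le_self_add).ne'
  · refine integrable_toReal_of_lintegral_ne_top
      (measurable_const.add (measurable_staircase _ _)).aemeasurable ?_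
    rw [hT]
    refine ENNReal.add_ne_top.2 ⟨by simp, ne_top_of_le_ne_top ?_ (lintegral_staircase_le_tsum _ _)⟩
    simp_rw [hmass]
    rw [← ENNReal.ofReal_tsum_of_nonneg (fun n => by positivity)
      ((summable_geometric_of_lt_one (by norm_num) (by norm_num)).mul_left 4)]
    exact ENNReal.ofReal_ne_top
  · intro t ht n hn
    rw [setLIntegral_congr_fun measurableSet_Ioo fun x hx =>
      ENNReal.ofReal_toReal (hT_ne_top x ⟨hx.1, hx.2.trans_le ht.2⟩), hT, Real.volume_Ioo,
      sub_zero, ENNReal.ofReal_add (mul_nonneg (by linarith [hA 0]) ht.1.le) (by positivity),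
      ENNReal.ofReal_mul (by linarith [hA 0]), ← hmass]
    gcongr
    exact mul_le_setLIntegral_staircase _ _ hn

theorem Filter.Tendsto.le_or_exists_le_lt {r : ℕ → ℝ} (hr : Tendsto r atTop (𝓝 0)) {t : ℝ}
    (ht : 0 < t) : r 0 ≤ t ∨ ∃ j, r (j + 1) ≤ t ∧ t < r j := by
  have hex : ∃ n, r n ≤ t := (hr.eventually (ge_mem_nhds ht)).exists
  rcases hk : Nat.find hex with _ | j
  · exact Or.inl (hk ▸ Nat.find_spec hex)
  · exact Or.inr ⟨j, hk ▸ Nat.find_spec hex, not_le.1 (Nat.find_min hex (by omega))⟩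

theorem exists_majorant {ι : Type*} (Φ : ι → ℝ → ℝ≥0∞)
    (hΦ : ∀ ε > 0, ∃ M, ∀ i, ∀ t ∈ Ioc (0 : ℝ) 1, Φ i t ≤ ENNReal.ofReal (M * t + ε)) :
    ∃ g : ℝ → ℝ, (∀ x ∈ Ioo (0 : ℝ) 1, 0 < g x) ∧ IntegrableOn g (Ioo 0 1) ∧
      ∀ i, ∀ t ∈ Ioc (0 : ℝ) 1, Φ i t ≤ ∫⁻ x in Ioo 0 t, ENNReal.ofReal (g x) := by
  choose M hM using fun n : ℕ => hΦ ((2 : ℝ)⁻¹ ^ n) (by positivity)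
  set A : ℕ → ℝ := fun n => max (M n) 1
  have hA : ∀ n, 1 ≤ A n := fun n => le_max_right _ _
  obtain ⟨g, hg_pos, hg_int, hg⟩ := exists_step_majorant hA
  refine ⟨g, hg_pos, hg_int, fun i t ht => ?_⟩
  have hA0t : 0 ≤ A 0 * t := mul_nonneg (by linarith [hA 0]) ht.1.le
  -- for `2⁻⁽ʲ⁺¹⁾ / A (j + 1) ≤ t < 2⁻ʲ / A j` the bound of index `j` is `≤ 2 · 2⁻ʲ = 4 · 2⁻⁽ʲ⁺¹⁾`
  rcases (tendsto_inv_two_pow_div hA).le_or_exists_le_lt ht.1 with h0 | ⟨j, hj1, hj⟩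
  · refine (hM 0 i t ht).trans ((ENNReal.ofReal_le_ofReal ?_).trans (hg t ht 0 h0))
    have := mul_le_mul_of_nonneg_right (le_max_left (M 0) 1) ht.1.le
    simp only [pow_zero] at *
    linarith
  · refine (hM j i t ht).trans ((ENNReal.ofReal_le_ofReal ?_).trans (hg t ht (j + 1) hj1))
    have h1 : M j * t ≤ (2 : ℝ)⁻¹ ^ j :=
      calc M j * t ≤ A j * ((2 : ℝ)⁻¹ ^ j / A j) :=
            mul_le_mul (le_max_left _ _) hj.le ht.1.le (by linarith [hA j])
        _ = (2 : ℝ)⁻¹ ^ j := mul_div_cancel₀ _ (by linarith [hA j])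
    rw [pow_succ]
    nlinarith

theorem exists_submaj01_of_isOrliczFunction {K : Set (ℝ → ℝ)}
    (hK : ∀ f ∈ K, AEMeasurable f (volume.restrict (Ioo 0 1)))
    {G : ℝ → ℝ} (hG : IsOrliczFunction G) (hGtop : Tendsto (fun t => G t / t) atTop atTop)
    {C : ℝ} (hC : ∀ f ∈ K, ∫⁻ s in Ioo 0 1, ENNReal.ofReal (G |f s|) ≤ ENNReal.ofReal C) :
    ∃ g : ℝ → ℝ, (∀ x ∈ Ioo (0 : ℝ) 1, 0 < g x) ∧ IntegrableOn g (Ioo 0 1) ∧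
      ∀ f ∈ K, Submaj01 f g := by
  obtain ⟨g, hg_pos, hg_int, hg⟩ :=
    exists_majorant (fun (f : K) t => ∫⁻ s in Ioo 0 t, ENNReal.ofReal (mu01 f s)) fun ε hε => by
      obtain ⟨M, hM, htail⟩ := exists_lintegral_ofReal_sub_le_of_superlinear _ K hG hGtop hC hε
      refine ⟨M, fun f t ht => (lintegral_mu01_le_add (hK f f.2) hM t).trans ?_⟩
      rw [ENNReal.ofReal_add (mul_nonneg hM ht.1.le) hε.le]
      gcongr
      exact htail f f.2
  refine ⟨g, hg_pos, hg_int, fun f hf t ht => (hg ⟨f, hf⟩ t ht).trans ?_⟩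
  calc ∫⁻ x in Ioo 0 t, ENNReal.ofReal (g x)
      ≤ ∫⁻ x in Ioo 0 t, ENNReal.ofReal |g x| :=
        lintegral_mono fun x => ENNReal.ofReal_le_ofReal (le_abs_self _)
    _ ≤ _ := setLIntegral_abs_le_lintegral_mu01 hg_int.aemeasurable ht.2

theorem stmt7_general (K : Set (ℝ → ℝ))
    (hK : ∀ f ∈ K, IntegrableOn f (Ioo 0 1) volume) :
    (∃ G : ℝ → ℝ, IsOrliczFunction G ∧ Tendsto (fun t => G t / t) atTop atTop ∧
      ∃ C : ℝ, ∀ f ∈ K,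
        ∫⁻ s in Ioo (0:ℝ) 1, ENNReal.ofReal (G |f s|) ≤ ENNReal.ofReal C) ↔
    (∃ g : ℝ → ℝ, (∀ x ∈ Ioo (0:ℝ) 1, 0 < g x) ∧ IntegrableOn g (Ioo 0 1) volume ∧
      ∀ f ∈ K, Submaj01 f g) := by
  have hKm : ∀ f ∈ K, AEMeasurable f (volume.restrict (Ioo 0 1)) :=
    fun f hf => (hK f hf).aemeasurable
  constructor
  · rintro ⟨G, hG, hGtop, C, hC⟩
    exact exists_submaj01_of_isOrliczFunction hKm hG hGtop hC
  · rintro ⟨g, -, hg, hsub⟩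
    exact exists_isOrliczFunction_of_lintegral_ofReal_sub_le _ K hKm fun ε hε =>
      exists_lintegral_ofReal_sub_le_of_submaj01 hKm hg hsub hε

theorem stmt7 (K : Set (ℝ → ℝ))
    (hK : ∀ f ∈ K, IntegrableOn f (Ioo 0 1) volume)
    (hKb : ∃ C : ℝ, ∀ f ∈ K, ∫ x in Ioo (0:ℝ) 1, |f x| ≤ C) :
    (∃ G : ℝ → ℝ, IsOrliczFunction G ∧ Tendsto (fun t => G t / t) atTop atTop ∧
      ∃ C : ℝ, ∀ f ∈ K,
        ∫⁻ s in Ioo (0:ℝ) 1, ENNReal.ofReal (G |f s|) ≤ ENNReal.ofReal C) ↔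
    (∃ g : ℝ → ℝ, (∀ x ∈ Ioo (0:ℝ) 1, 0 < g x) ∧ IntegrableOn g (Ioo 0 1) volume ∧
      ∀ f ∈ K, Submaj01 f g) :=
  stmt7_general K hK
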